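/- arXiv:1406.4712 — 2 statements merged into one kernel-verified Lean document; each statement's English description precedes it below -/
import Mathlib

section
/- Let Φ be an orthonormal set and f(x) = ⋁_i (α_i(x) && φ_i(x)) an ON expansion. Then f = 0 is consistent if and only if there exists an index i such that the system α_i(x) = false and φ_i(x) = true is consistent. -/
theorem consistency_iff_system (n m : ℕ)
    (f : (Fin n → Bool) → Bool)
    (φ α : Fin m → (Fin n → Bool) → Bool)
    (horth : ∀ i j, i ≠ j → ∀ x, (φ i x && φ j x) = false)
    (hnorm : ∀ x, (Finset.univ.sup fun i => φ i x) = true)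
    (hexp : ∀ x, f x = Finset.univ.sup fun i => (α i x && φ i x)) :
    (∃ x, f x = false) ↔ ∃ i, ∃ x, α i x = false ∧ φ i x = true := by
  constructor
  · rintro ⟨x, hx⟩
    rw [hexp] at hx
    have hall : ∀ i, (α i x && φ i x) = false := by
      intro i
      have := (Finset.sup_eq_bot_iff _ _).mp hx i (Finset.mem_univ i)
      exact this
    obtain ⟨i, hi⟩ : ∃ i, φ i x = true := by
      by_contra h
      push_neg at h
      have : (Finset.univ.sup fun i => φ i x) = false := by
        apply (Finset.sup_eq_bot_iff _ _).mpr
        intro j _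
        simpa using h j
      rw [hnorm x] at this
      simp at this
    refine ⟨i, x, ?_, hi⟩
    have := hall i
    simp [hi] at this
    exact this
  · rintro ⟨i, x, hα, hφ⟩
    refine ⟨x, ?_⟩
    rw [hexp]
    apply (Finset.sup_eq_bot_iff _ _).mpr
    intro j _
    by_cases hj : j = i
    · subst hj; simp [hα]
    · have := horth j i hj x
      rw [hφ] at this
      simp at this
      simp [this]
end

section
/- Let f_k, g_k (k = 1,…,N) be Boolean functions on {0,1}^n with ON expansions f_k(x) = ⋁_j (α_{kj}(x) && φ_j(x)) and g_k(x) = ⋁_j (β_{kj}(x) && φ_j(x)) with respect to a common orthonormal set Φ. Then the system f_k(x) = g_k(x) for all k is consistent if and only if there exists an index j ∈ [1,m] and a point q in the support of φ_j such that α_{kj}(q) = β_{kj}(q) for all k. Moreover every solution of the system arises this way. -/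
lemma bool_sup_eq_true {ι : Type*} (s : Finset ι) (f : ι → Bool) :
    s.sup f = true ↔ ∃ i ∈ s, f i = true := by
  constructor
  · intro h
    by_contra hc
    push_neg at hc
    have : s.sup f = false := by
      apply (Finset.sup_eq_bot_iff f s).mpr
      intro i hi
      simpa using hc i hi
    simp [this] at h
  · rintro ⟨i, hi, hfi⟩
    have h1 : f i ≤ s.sup f := Finset.le_sup hi
    rw [hfi] at h1
    have : (⊤ : Bool) ≤ s.sup f := by simpa using h1
    simpa using top_unique this

lemma bool_sup_single {ι : Type*} [Fintype ι] [DecidableEq ι] (f : ι → Bool) (j0 : ι)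
    (h : ∀ j, j ≠ j0 → f j = false) : Finset.univ.sup f = f j0 := by
  apply le_antisymm
  · apply Finset.sup_le
    intro j _
    by_cases hj : j = j0
    · subst hj; exact le_rfl
    · simp [h j hj]
  · exact Finset.le_sup (Finset.mem_univ j0)

theorem system_consistency (n m N : ℕ)
    (f g : Fin N → (Fin n → Bool) → Bool)
    (φ : Fin m → (Fin n → Bool) → Bool)
    (α β : Fin N → Fin m → (Fin n → Bool) → Bool)
    (horth : ∀ i j, i ≠ j → ∀ x, (φ i x && φ j x) = false)
    (hnorm : ∀ x, (Finset.univ.sup fun i => φ i x) = true)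
    (hexpf : ∀ k, ∀ x, f k x = Finset.univ.sup fun j => (α k j x && φ j x))
    (hexpg : ∀ k, ∀ x, g k x = Finset.univ.sup fun j => (β k j x && φ j x)) :
    ((∃ q, ∀ k, f k q = g k q) ↔
      ∃ j, ∃ q, φ j q = true ∧ ∀ k, α k j q = β k j q) ∧
    (∀ q, (∀ k, f k q = g k q) →
      ∃ j, φ j q = true ∧ ∀ k, α k j q = β k j q) := by
  -- key: for any q, there is a unique j0 with φ j0 q = true, and f/g collapse there
  have key : ∀ q, ∃ j0, φ j0 q = true ∧
      (∀ k, f k q = α k j0 q) ∧ (∀ k, g k q = β k j0 q) := by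
    intro q
    obtain ⟨j0, -, hj0⟩ := (bool_sup_eq_true _ _).mp (hnorm q)
    have hother : ∀ j, j ≠ j0 → φ j q = false := by
      intro j hj
      have := horth j0 j (fun h => hj h.symm) q
      rw [hj0] at this
      simpa using this
    refine ⟨j0, hj0, ?_, ?_⟩
    · intro k
      rw [hexpf k q, bool_sup_single _ j0 (fun j hj => by simp [hother j hj]), hj0]
      simp
    · intro k
      rw [hexpg k q, bool_sup_single _ j0 (fun j hj => by simp [hother j hj]), hj0]
      simp
  have dir : ∀ q, (∀ k, f k q = g k q) →
      ∃ j, φ j q = true ∧ ∀ k, α k j q = β k j q := by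
    intro q hq
    obtain ⟨j0, hj0, hf, hg⟩ := key q
    exact ⟨j0, hj0, fun k => by rw [← hf k, ← hg k]; exact hq k⟩
  refine ⟨⟨fun ⟨q, hq⟩ => ?_, fun ⟨j, q, hj, hab⟩ => ⟨q, ?_⟩⟩, dir⟩
  · obtain ⟨j, hj, h⟩ := dir q hq
    exact ⟨j, q, hj, h⟩
  · intro k
    obtain ⟨j0, hj0, hf, hg⟩ := key q
    have hjj : j = j0 := by
      by_contra hne
      have := horth j j0 hne q
      rw [hj, hj0] at this
      simp at this
    subst hjj
    rw [hf k, hg k]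
    exact hab k
end
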